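/- Suppose π is a d^p probability tensor corresponding to a weakly hierarchical log-linear model θ, with C_θ^{(j)} ≠ ∅ for all j ∈ V. For H = (H_1,…,H_p) ∈ ℋ and l ∈ V, set W_l = { j ∈ V∖{l} : |H_j| = d−1 } and W̄_l = V ∖ W_l. Then rnk⁺_P(π) ≤ min over H ∈ ℋ and l ∈ V of [ ∏_{j∈V} ( |H_j| + 1 ) − ( ∏_{j∈W_l} ( |H_j| + 1 ) ) · ( ∏_{j∈W̄_l} |H_j| ) ]. -/

import Mathlib

/-- A nonnegative PARAFAC decomposition with `m` terms. -/
def IsParafacDecomp {p : ℕ} {d : Fin p → ℕ}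
    (M : ((j : Fin p) → Fin (d j)) → ℝ) (m : ℕ) : Prop :=
  ∃ lam : Fin m → (j : Fin p) → Fin (d j) → ℝ,
    (∀ h j c, 0 ≤ lam h j c) ∧
    ∀ i : (j : Fin p) → Fin (d j), M i = ∑ h : Fin m, ∏ j : Fin p, lam h j (i j)

/-- The nonnegative PARAFAC rank. -/
noncomputable def parafacRank {p : ℕ} {d : Fin p → ℕ}
    (M : ((j : Fin p) → Fin (d j)) → ℝ) : ℕ :=
  sInf {m | IsParafacDecomp M m}

/-- The probability tensor of the log-linear model `θ`:
`π i = exp (∑_{E ⊆ V} θ_E(i_E))`, normalized so that the entries sum to one. -/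
noncomputable def loglinTensor {p : ℕ} {d : Fin p → ℕ}
    (θ : Finset (Fin p) → ((j : Fin p) → Fin (d j)) → ℝ) :
    ((j : Fin p) → Fin (d j)) → ℝ :=
  fun i => Real.exp (∑ E : Finset (Fin p), θ E i) /
    ∑ i' : (j : Fin p) → Fin (d j), Real.exp (∑ E : Finset (Fin p), θ E i')

/-!
Cut the grid into boxes indexed by patterns: each coordinate is either a level of `H j` or the
block of levels outside `H j`. On a box, two coordinates ranging outside their `H j` never share
a nonzero interaction (`H ∈ ℋ` kills the pair, weak hierarchy every superset), so `log π` is a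
sum of functions of one coordinate each and `π` restricted to the box has nonnegative rank one. If
every free coordinate other than `l` has only one level outside `H j`, the box is a line in
direction `l`, and the `|H l| + 1` such lines differing only in coordinate `l` glue into one
rank-one slice; this saves `(∏_{W_l} (|H j| + 1)) * ∏_{W̄_l} |H j|` terms.
-/

section RankOne

variable {p : ℕ} {d : Fin p → ℕ}

def IsNonnegRankOne (T : ((j : Fin p) → Fin (d j)) → ℝ) : Prop :=
  ∃ lam : (j : Fin p) → Fin (d j) → ℝ,
    (∀ j c, 0 ≤ lam j c) ∧ ∀ x, T x = ∏ j, lam j (x j)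

theorem IsNonnegRankOne.mul {T S : ((j : Fin p) → Fin (d j)) → ℝ}
    (hT : IsNonnegRankOne T) (hS : IsNonnegRankOne S) : IsNonnegRankOne (fun x => T x * S x) := by
  obtain ⟨lam, hlam0, hlam⟩ := hT
  obtain ⟨mu, hmu0, hmu⟩ := hS
  exact ⟨fun j c => lam j c * mu j c, fun j c => mul_nonneg (hlam0 j c) (hmu0 j c),
    fun x => by simp only [hlam, hmu, Finset.prod_mul_distrib]⟩

theorem IsNonnegRankOne.prod {α : Type*} [Fintype α]
    {T : α → ((j : Fin p) → Fin (d j)) → ℝ}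
    (hT : ∀ a, IsNonnegRankOne (T a)) : IsNonnegRankOne (fun x => ∏ a, T a x) := by
  choose lam hlam0 hlam using hT
  exact ⟨fun j c => ∏ a, lam a j c, fun j c => Finset.prod_nonneg fun a _ => hlam0 a j c,
    fun x => by simp only [hlam]; exact Finset.prod_comm⟩

theorem isNonnegRankOne_comp_eval (j : Fin p) {f : Fin (d j) → ℝ} (hf : 0 ≤ f) :
    IsNonnegRankOne (fun x => f (x j)) := by
  refine ⟨Function.update (fun _ _ => 1) j f, fun j' c => ?_, fun x => ?_⟩
  · rcases eq_or_ne j' j with rfl | hj'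
    · simpa using hf c
    · simp [Function.update_of_ne hj']
  · rw [Finset.prod_eq_single_of_mem j (Finset.mem_univ j) fun j' _ hj' => by
      simp [Function.update_of_ne hj'], Function.update_self]

theorem isNonnegRankOne_const [Nonempty (Fin p)] {c : ℝ} (hc : 0 ≤ c) :
    IsNonnegRankOne (d := d) (fun _ => c) :=
  isNonnegRankOne_comp_eval (Classical.arbitrary _) (f := fun _ => c) fun _ => hc

theorem isNonnegRankOne_boxIndicator (B : (j : Fin p) → Finset (Fin (d j))) :
    IsNonnegRankOne (fun x => if ∀ j, x j ∈ B j then (1 : ℝ) else 0) :=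
  ⟨fun j c => if c ∈ B j then 1 else 0, fun _ _ => ite_nonneg zero_le_one le_rfl,
    fun x => by rw [Finset.prod_boole]; simp⟩

theorem parafacRank_le_of_eq_sum {κ : Type*} [Fintype κ] {M : ((j : Fin p) → Fin (d j)) → ℝ}
    (T : κ → ((j : Fin p) → Fin (d j)) → ℝ) (hT : ∀ k, IsNonnegRankOne (T k))
    (hM : ∀ x, M x = ∑ k, T k x) : parafacRank M ≤ Fintype.card κ := by
  choose lam hlam0 hlam using hT
  let e := Fintype.equivFin κ
  refine Nat.sInf_le ⟨fun h => lam (e.symm h), fun h => hlam0 _, fun x => ?_⟩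
  rw [hM, ← e.symm.sum_comp]
  exact Finset.sum_congr rfl fun h _ => hlam _ x

theorem exists_forall_eq_update_of_mem_box [Nonempty (Fin p)]
    {θ : Finset (Fin p) → ((j : Fin p) → Fin (d j)) → ℝ}
    (hθ : ∀ E x y, (∀ j ∈ E, x j = y j) → θ E x = θ E y)
    {B : (j : Fin p) → Finset (Fin (d j))} {V : Finset (Fin p)}
    (hB : ∀ j ∉ V, (B j : Set (Fin (d j))).Subsingleton)
    (hθB : ∀ x, (∀ j, x j ∈ B j) → ∀ E, 1 < (E ∩ V).card → θ E x = 0)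
    {b : (j : Fin p) → Fin (d j)} (hb : ∀ j, b j ∈ B j) (E : Finset (Fin p)) :
    ∃ j, ∀ x : (j : Fin p) → Fin (d j), (∀ j, x j ∈ B j) →
      θ E x = θ E (Function.update b j (x j)) := by
  by_cases hE : 1 < (E ∩ V).card
  · let j₀ : Fin p := Classical.arbitrary _
    refine ⟨j₀, fun x hx => ?_⟩
    have hupdate : ∀ j', Function.update b j₀ (x j₀) j' ∈ B j' :=
      (Function.forall_update_iff b fun j' c => c ∈ B j').mpr ⟨hx j₀, fun j' _ => hb j'⟩
    rw [hθB x hx E hE, hθB _ hupdate E hE]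
  obtain ⟨j, hj⟩ := Finset.card_le_one_iff_subset_singleton.mp (not_lt.mp hE)
  refine ⟨j, fun x hx => hθ E _ _ fun j' hj' => ?_⟩
  rcases eq_or_ne j' j with rfl | hne
  · rw [Function.update_self]
  · rw [Function.update_of_ne hne]
    refine hB j' (fun hV => hne ?_) (hx j') (hb j')
    exact Finset.mem_singleton.mp (hj (Finset.mem_inter.mpr ⟨hj', hV⟩))

theorem isNonnegRankOne_ite_loglinTensor [Nonempty (Fin p)]
    {θ : Finset (Fin p) → ((j : Fin p) → Fin (d j)) → ℝ}
    (hθ : ∀ E x y, (∀ j ∈ E, x j = y j) → θ E x = θ E y)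
    (B : (j : Fin p) → Finset (Fin (d j))) (V : Finset (Fin p))
    (hB : ∀ j ∉ V, (B j : Set (Fin (d j))).Subsingleton)
    (hθB : ∀ x, (∀ j, x j ∈ B j) → ∀ E, 1 < (E ∩ V).card → θ E x = 0) :
    IsNonnegRankOne (fun x => if ∀ j, x j ∈ B j then loglinTensor θ x else 0) := by
  by_cases hne : ∃ b : (j : Fin p) → Fin (d j), ∀ j, b j ∈ B j
  swap
  · convert isNonnegRankOne_const (d := d) le_rfl using 2 with x
    exact if_neg fun hx => hne ⟨x, hx⟩
  obtain ⟨b, hb⟩ := hne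
  choose jE hjE using exists_forall_eq_update_of_mem_box hθ hB hθB hb
  have hfactor : (fun x => if ∀ j, x j ∈ B j then loglinTensor θ x else 0) = fun x =>
      ((if ∀ j, x j ∈ B j then (1 : ℝ) else 0) *
        ∏ E, Real.exp (θ E (Function.update b (jE E) (x (jE E))))) *
      (∑ y, Real.exp (∑ E, θ E y))⁻¹ := by
    funext x
    split_ifs with hx
    · rw [loglinTensor, one_mul, div_eq_mul_inv, Real.exp_sum]
      simp only [hjE _ _ hx]
    · simp
  rw [hfactor]
  refine ((isNonnegRankOne_boxIndicator B).mul (IsNonnegRankOne.prod fun E => ?_)).mul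
    (isNonnegRankOne_const (inv_nonneg.mpr (Finset.sum_nonneg fun _ _ => (Real.exp_pos _).le)))
  exact isNonnegRankOne_comp_eval (jE E)
    (f := fun c => Real.exp (θ E (Function.update b (jE E) c))) fun _ => (Real.exp_pos _).le

end RankOne

section LogLinear

variable {p d : ℕ}

def IsWeaklyHierarchical (θ : Finset (Fin p) → (Fin p → Fin d) → ℝ) : Prop :=
  ∀ (E F : Finset (Fin p)) (i i' : Fin p → Fin d),
    E ⊆ F → θ E i = 0 → (∀ j ∈ E, i' j = i j) → θ F i' = 0

/-- `H ∈ ℋ`. -/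
def IsInteractionCover (θ : Finset (Fin p) → (Fin p → Fin d) → ℝ)
    (H : Fin p → Finset (Fin d)) : Prop :=
  ∀ (E : Finset (Fin p)) (i : Fin p → Fin d),
    2 ≤ E.card → θ E i ≠ 0 → ∃ j ∈ E, i j ∈ H j

theorem IsWeaklyHierarchical.eq_zero_of_notMem_cover
    {θ : Finset (Fin p) → (Fin p → Fin d) → ℝ}
    {H : Fin p → Finset (Fin d)} (hθ : IsWeaklyHierarchical θ) (hH : IsInteractionCover θ H)
    {E : Finset (Fin p)} {x : Fin p → Fin d} {j j' : Fin p} (hj : j ∈ E) (hj' : j' ∈ E)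
    (hne : j ≠ j') (hxj : x j ∉ H j) (hxj' : x j' ∉ H j') : θ E x = 0 := by
  have hpair : θ {j, j'} x = 0 := by
    by_contra h
    obtain ⟨k, hk, hxk⟩ := hH {j, j'} x (Finset.card_pair hne).ge h
    rcases Finset.mem_insert.mp hk with rfl | hk
    exacts [hxj hxk, hxj' (Finset.mem_singleton.mp hk ▸ hxk)]
  exact hθ {j, j'} E x x (Finset.insert_subset hj (Finset.singleton_subset_iff.mpr hj')) hpair
    fun _ _ => rfl

end LogLinear

namespace LevelPattern

variable {p d : ℕ} (H : Fin p → Finset (Fin d)) (l : Fin p)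

/-- For each variable, either a level in `H j` or `none`, standing for the levels outside `H j`. -/
abbrev Pattern := (j : Fin p) → Option (H j)

def levelClass (j : Fin p) (c : Fin d) : Option (H j) :=
  if h : c ∈ H j then some ⟨c, h⟩ else none

def cellPattern (x : Fin p → Fin d) : Pattern H := fun j => levelClass H j (x j)

/-- All free coordinates other than `l` are pinned to the single level outside `H j`. -/
def IsSpecial (z : Pattern H) : Prop :=
  ∀ j, j ≠ l → z j = none → (H j).card = d - 1

instance : DecidablePred (IsSpecial H l) := fun z => by unfold IsSpecial; infer_instance

/-- Special patterns that differ only at `l` are merged into the one free at `l`. -/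
def merge (z : Pattern H) : Pattern H :=
  if IsSpecial H l z then Function.update z l none else z

def box (z : Pattern H) (j : Fin p) : Finset (Fin d) :=
  Finset.univ.filter fun c => (j = l ∧ IsSpecial H l z) ∨ levelClass H j c = z j

def varying (z : Pattern H) : Finset (Fin p) :=
  Finset.univ.filter fun j => z j = none ∧ (j = l ∨ ¬IsSpecial H l z)

variable {H l}

theorem levelClass_eq_none_iff {j : Fin p} {c : Fin d} : levelClass H j c = none ↔ c ∉ H j := by
  unfold levelClass; split_ifs with h <;> simp [h]

theorem eq_of_levelClass_eq_some {j : Fin p} {c : Fin d} {a : H j}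
    (h : levelClass H j c = some a) : c = a := by
  unfold levelClass at h; split_ifs at h; cases h; rfl

theorem isSpecial_congr {z z' : Pattern H} (h : ∀ j ≠ l, z j = z' j) :
    IsSpecial H l z ↔ IsSpecial H l z' :=
  forall_congr' fun j => forall_congr' fun hj => by rw [h j hj]

theorem merge_apply_of_ne (z : Pattern H) {j : Fin p} (hj : j ≠ l) : merge H l z j = z j := by
  unfold merge; split_ifs <;> simp [Function.update_of_ne hj]

theorem isSpecial_merge (z : Pattern H) : IsSpecial H l (merge H l z) ↔ IsSpecial H l z :=
  isSpecial_congr fun _ hj => merge_apply_of_ne z hj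

theorem merge_eq_self_iff {z : Pattern H} :
    merge H l z = z ↔ (IsSpecial H l z → z l = none) := by
  unfold merge; split_ifs with hs <;> simp [hs, eq_comm]

theorem merge_merge (z : Pattern H) : merge H l (merge H l z) = merge H l z := by
  refine merge_eq_self_iff.mpr fun hs => ?_
  rw [isSpecial_merge] at hs
  simp [merge, hs]

theorem merge_ne_self_iff {z : Pattern H} :
    merge H l z ≠ z ↔ ∀ j, (j ≠ l ∧ (H j).card = d - 1) ∨ z j ≠ none := by
  rw [Ne, merge_eq_self_iff, Classical.not_imp]
  constructor
  · rintro ⟨hs, hl⟩ j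
    by_cases hj : z j = none
    · exact Or.inl ⟨fun h => hl (h ▸ hj), hs j (fun h => hl (h ▸ hj)) hj⟩
    · exact Or.inr hj
  · intro h
    exact ⟨fun j _ hj => ((h j).resolve_right (not_not.mpr hj)).2,
      (h l).resolve_left fun h => h.1 rfl⟩

theorem merge_cellPattern_eq_iff {z : Pattern H} (hz : merge H l z = z) {x : Fin p → Fin d} :
    merge H l (cellPattern H x) = z ↔ ∀ j, x j ∈ box H l z j := by
  simp only [box, Finset.mem_filter, Finset.mem_univ, true_and]
  constructor
  · rintro rfl j
    by_cases hj : j = l ∧ IsSpecial H l (merge H l (cellPattern H x))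
    · exact Or.inl hj
    refine Or.inr ?_
    rcases eq_or_ne j l with rfl | hjl
    · have hs : ¬IsSpecial H j (cellPattern H x) := fun h =>
        hj ⟨rfl, (isSpecial_merge _).mpr h⟩
      simp [merge, hs, cellPattern]
    · rw [merge_apply_of_ne _ hjl, cellPattern]
  · intro hx
    have hoff : ∀ j ≠ l, cellPattern H x j = z j := fun j hj =>
      (hx j).resolve_left fun h => hj h.1
    by_cases hs : IsSpecial H l z
    · have hs' : IsSpecial H l (cellPattern H x) := (isSpecial_congr hoff).mpr hs
      funext j
      rcases eq_or_ne j l with rfl | hjl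
      · simp [merge, hs', merge_eq_self_iff.mp hz hs]
      · rw [merge_apply_of_ne _ hjl, hoff j hjl]
    · have hpat : cellPattern H x = z := funext fun j => (hx j).resolve_left fun h => hs h.2
      rw [← hpat] at hs ⊢
      simp [merge, hs]

theorem subsingleton_box {z : Pattern H} (hz : merge H l z = z) {j : Fin p}
    (hj : j ∉ varying H l z) : (box H l z j : Set (Fin d)).Subsingleton := by
  simp only [varying, Finset.mem_filter, Finset.mem_univ, true_and, not_and, not_or,
    not_not] at hj
  intro a ha b hb
  simp only [box, Finset.coe_filter, Finset.mem_univ, true_and] at ha hb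
  cases hzj : z j with
  | some c =>
    have hfixed : ¬(j = l ∧ IsSpecial H l z) := fun ⟨hjl, hs⟩ => by
      have hzl := merge_eq_self_iff.mp hz hs
      rw [← hjl, hzj] at hzl
      exact Option.some_ne_none c hzl
    rw [hzj] at ha hb
    rw [eq_of_levelClass_eq_some (ha.resolve_left hfixed),
      eq_of_levelClass_eq_some (hb.resolve_left hfixed)]
  | none =>
    obtain ⟨hjl, hs⟩ := hj hzj
    rw [hzj] at ha hb
    have hout : ∀ c, (j = l ∧ IsSpecial H l z) ∨ levelClass H j c = none → c ∈ (H j)ᶜ :=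
      fun c hc => Finset.mem_compl.mpr
        (levelClass_eq_none_iff.mp (hc.resolve_left fun h => hjl h.1))
    have hcard : (H j)ᶜ.card ≤ 1 := by
      rw [Finset.card_compl, Fintype.card_fin, hs j hjl hzj]; omega
    exact Finset.card_le_one.mp hcard a (hout a ha) b (hout b hb)

theorem notMem_of_mem_box_of_mem_varying {z : Pattern H} {j j' : Fin p} (hne : j ≠ j')
    (hj : j ∈ varying H l z) (hj' : j' ∈ varying H l z) {c : Fin d} (hc : c ∈ box H l z j) :
    c ∉ H j := by
  simp only [varying, Finset.mem_filter, Finset.mem_univ, true_and] at hj hj'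
  have hs : ¬IsSpecial H l z := by
    rcases hj.2 with rfl | hs
    · exact hj'.2.resolve_left (Ne.symm hne)
    · exact hs
  simp only [box, Finset.mem_filter, Finset.mem_univ, true_and, hs, and_false, false_or,
    hj.1] at hc
  exact levelClass_eq_none_iff.mp hc

theorem interaction_eq_zero_of_mem_box {θ : Finset (Fin p) → (Fin p → Fin d) → ℝ}
    (hθ : IsWeaklyHierarchical θ) (hH : IsInteractionCover θ H) {z : Pattern H}
    {x : Fin p → Fin d} (hx : ∀ j, x j ∈ box H l z j) {E : Finset (Fin p)}
    (hE : 1 < (E ∩ varying H l z).card) : θ E x = 0 := by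
  obtain ⟨j, hj, j', hj', hne⟩ := Finset.one_lt_card.mp hE
  rw [Finset.mem_inter] at hj hj'
  exact hθ.eq_zero_of_notMem_cover hH hj.1 hj'.1 hne
    (notMem_of_mem_box_of_mem_varying hne hj.2 hj'.2 (hx j))
    (notMem_of_mem_box_of_mem_varying hne.symm hj'.2 hj.2 (hx j'))

theorem sum_ite_forall_mem_box (x : Fin p → Fin d) (a : ℝ) :
    ∑ z : {z : Pattern H // merge H l z = z},
      (if ∀ j, x j ∈ box H l z.1 j then a else 0) = a := by
  rw [Finset.sum_eq_single_of_mem ⟨merge H l (cellPattern H x), merge_merge _⟩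
    (Finset.mem_univ _)]
  · exact if_pos ((merge_cellPattern_eq_iff (merge_merge _)).mp rfl)
  · rintro z - hne
    exact if_neg fun hx => hne (Subtype.ext ((merge_cellPattern_eq_iff z.2).mpr hx).symm)

variable (H l) in
theorem card_fixedPoints_merge :
    Fintype.card {z : Pattern H // merge H l z = z} =
      ∏ j : Fin p, ((H j).card + 1) -
        (∏ j ∈ Finset.univ.filter (fun j : Fin p => j ≠ l ∧ (H j).card = d - 1),
            ((H j).card + 1)) *
          ∏ j ∈ (Finset.univ.filter (fun j : Fin p => j ≠ l ∧ (H j).card = d - 1))ᶜ,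
            (H j).card := by
  have hall : Fintype.card (Pattern H) = ∏ j : Fin p, ((H j).card + 1) := by
    simp [Fintype.card_pi]
  have hmoved : Fintype.card {z : Pattern H // merge H l z ≠ z} =
      (∏ j ∈ Finset.univ.filter (fun j : Fin p => j ≠ l ∧ (H j).card = d - 1),
          ((H j).card + 1)) *
        ∏ j ∈ (Finset.univ.filter (fun j : Fin p => j ≠ l ∧ (H j).card = d - 1))ᶜ,
          (H j).card := by
    rw [Fintype.card_congr ((Equiv.subtypeEquivRight fun z => merge_ne_self_iff).trans
      (Equiv.subtypePiEquivPi (p := fun j (o : Option (H j)) =>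
        (j ≠ l ∧ (H j).card = d - 1) ∨ o ≠ none))),
      Fintype.card_pi, Finset.compl_filter, ← Finset.prod_ite]
    refine Finset.prod_congr rfl fun j _ => ?_
    split_ifs with h <;> simp [h]
  rw [← hall, ← hmoved, ← Fintype.card_subtype_compl]
  exact Fintype.card_congr (Equiv.subtypeEquivRight fun z => not_not.symm)

end LevelPattern

open LevelPattern in
theorem parafacRank_le_tight_bound_general {p d : ℕ}
    (θ : Finset (Fin p) → (Fin p → Fin d) → ℝ)
    (hdep : ∀ (E : Finset (Fin p)) (i i' : Fin p → Fin d),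
      (∀ j ∈ E, i j = i' j) → θ E i = θ E i')
    (hwh : ∀ (E F : Finset (Fin p)) (i i' : Fin p → Fin d),
      E ⊆ F → θ E i = 0 → (∀ j ∈ E, i' j = i j) → θ F i' = 0)
    (H : Fin p → Finset (Fin d))
    (hH : ∀ (E : Finset (Fin p)) (i : Fin p → Fin d),
      2 ≤ E.card → θ E i ≠ 0 → ∃ j ∈ E, i j ∈ H j)
    (l : Fin p) :
    parafacRank (d := fun _ => d) (loglinTensor (d := fun _ => d) θ) ≤
      ∏ j : Fin p, ((H j).card + 1) -
        (∏ j ∈ Finset.univ.filter (fun j : Fin p => j ≠ l ∧ (H j).card = d - 1),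
            ((H j).card + 1)) *
          ∏ j ∈ (Finset.univ.filter (fun j : Fin p => j ≠ l ∧ (H j).card = d - 1))ᶜ,
            (H j).card := by
  have : Nonempty (Fin p) := ⟨l⟩
  rw [← card_fixedPoints_merge H l]
  refine parafacRank_le_of_eq_sum
    (fun z x => if ∀ j, x j ∈ box H l z.1 j then loglinTensor θ x else 0) (fun z => ?_)
    fun x => (sum_ite_forall_mem_box x _).symm
  exact isNonnegRankOne_ite_loglinTensor hdep _ (varying H l z.1) (fun _ => subsingleton_box z.2)
    fun _ hx _ => interaction_eq_zero_of_mem_box hwh hH hx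

/-- Second part of Theorem 2 (the tight bound): if `π` is the `d^p` probability tensor of
a weakly hierarchical log-linear model `θ` with `C_θ^{(j)} ≠ ∅` for all `j`, then for
every cover `H ∈ ℋ` of the nonzero interactions and every variable `l`, with
`W_l = {j ≠ l : |H_j| = d - 1}` and `W̄_l = V \ W_l`, the nonnegative PARAFAC rank of `π`
is at most
`∏_{j∈V} (|H_j|+1) − (∏_{j∈W_l} (|H_j|+1)) ⬝ (∏_{j∈W̄_l} |H_j|)`.
(Hence the rank is at most the minimum of this bound over `H ∈ ℋ` and `l ∈ V`.) -/
theorem parafacRank_le_tight_bound {p d : ℕ}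
    (θ : Finset (Fin p) → (Fin p → Fin d) → ℝ)
    (hdep : ∀ (E : Finset (Fin p)) (i i' : Fin p → Fin d),
      (∀ j ∈ E, i j = i' j) → θ E i = θ E i')
    (hwh : ∀ (E F : Finset (Fin p)) (i i' : Fin p → Fin d),
      E ⊆ F → θ E i = 0 → (∀ j ∈ E, i' j = i j) → θ F i' = 0)
    (hC : ∀ j : Fin p, ∃ j' : Fin p, j' ≠ j ∧ ∃ x : Fin p → Fin d, θ {j, j'} x ≠ 0)
    (H : Fin p → Finset (Fin d))
    (hH : ∀ (E : Finset (Fin p)) (i : Fin p → Fin d),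
      2 ≤ E.card → θ E i ≠ 0 → ∃ j ∈ E, i j ∈ H j)
    (l : Fin p) :
    parafacRank (d := fun _ => d) (loglinTensor (d := fun _ => d) θ) ≤
      ∏ j : Fin p, ((H j).card + 1) -
        (∏ j ∈ Finset.univ.filter (fun j : Fin p => j ≠ l ∧ (H j).card = d - 1),
            ((H j).card + 1)) *
          ∏ j ∈ (Finset.univ.filter (fun j : Fin p => j ≠ l ∧ (H j).card = d - 1))ᶜ,
            (H j).card :=
  parafacRank_le_tight_bound_general θ hdep hwh H hH l
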